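/- There exists a constant C > 0 such that for every nonzero integer k and every y ∈ [0,1], ∫₀¹ |G'_k(y,z)| dz ≤ C, where G'_k(y,z) = −k·cosh(k(1−z))·cosh(ky)/sinh(k) for 0 ≤ y ≤ z ≤ 1 and G'_k(y,z) = −k·cosh(kz)·cosh(k(1−y))/sinh(k) for 0 ≤ z < y ≤ 1. -/

import Mathlib

/-!
Since `k / sinh k > 0` for every `k ≠ 0`, the kernel `G'_k` is nonpositive, so its absolute
integral is minus its integral. On each side of the diagonal `G'_k(y, ·)` is a constant multiple
of `k cosh (k z)` or `k cosh (k (1 - z))`, whose primitives are hyperbolic sines; the two pieces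
add up to `(sinh (k y) cosh (k (1 - y)) + cosh (k y) sinh (k (1 - y))) / sinh k = 1`.
-/

/-- The regular part `G'_k` of the mixed derivative `∂_y ∂_z G_k` away from the diagonal. -/
noncomputable def greenG' (k : ℤ) (y z : ℝ) : ℝ :=
  if y ≤ z then -k * Real.cosh (k * (1 - z)) * Real.cosh (k * y) / Real.sinh k
  else -k * Real.cosh (k * z) * Real.cosh (k * (1 - y)) / Real.sinh k

open Real Set

lemma Real.div_sinh_pos {r : ℝ} (hr : r ≠ 0) : 0 < r / sinh r := by
  rcases hr.lt_or_gt with hneg | hpos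
  · exact div_pos_of_neg_of_neg hneg (sinh_neg_iff.2 hneg)
  · exact div_pos hpos (sinh_pos_iff.2 hpos)

lemma integral_mul_cosh_mul (r a b : ℝ) :
    ∫ z in a..b, r * cosh (r * z) = sinh (r * b) - sinh (r * a) := by
  refine intervalIntegral.integral_eq_sub_of_hasDerivAt (f := fun z => sinh (r * z))
    (fun z _ => ?_)
    ((by fun_prop : Continuous fun z => r * cosh (r * z)).intervalIntegrable a b)
  exact ((hasDerivAt_id z).const_mul r).sinh.congr_deriv (by simp [mul_comm])

section

variable {k : ℤ} {y z : ℝ}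

lemma continuous_greenG' (k : ℤ) (y : ℝ) : Continuous (greenG' k y) :=
  Continuous.if_le (by fun_prop) (by fun_prop) continuous_const continuous_id
    fun z (hz : y = z) => by subst hz; ring

lemma greenG'_eq_of_le (h : z ≤ y) :
    greenG' k y z = -(cosh (k * (1 - y)) / sinh k) * (k * cosh (k * z)) := by
  unfold greenG'
  rcases h.lt_or_eq with hlt | rfl
  · rw [if_neg hlt.not_ge]; ring
  · rw [if_pos le_rfl]; ring

lemma greenG'_eq_of_ge (h : y ≤ z) :
    greenG' k y z = -(cosh (k * y) / sinh k) * (k * cosh (k * (1 - z))) := by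
  unfold greenG'
  rw [if_pos h]; ring

lemma greenG'_nonpos (hk : k ≠ 0) : greenG' k y z ≤ 0 := by
  have hpos : 0 < (k : ℝ) / sinh k := div_sinh_pos (Int.cast_ne_zero.2 hk)
  have hform (a b : ℝ) :
      -(k : ℝ) * cosh a * cosh b / sinh k = -((k / sinh k) * (cosh a * cosh b)) := by ring
  unfold greenG'
  split_ifs <;> rw [hform, neg_nonpos] <;> positivity

lemma integral_greenG' (hk : k ≠ 0) (hy : y ∈ Icc (0 : ℝ) 1) :
    ∫ z in (0 : ℝ)..1, greenG' k y z = -1 := by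
  obtain ⟨hy0, hy1⟩ := hy
  have hs : sinh (k : ℝ) ≠ 0 := sinh_ne_zero.2 (Int.cast_ne_zero.2 hk)
  have hleft : ∫ z in (0 : ℝ)..y, greenG' k y z
      = -(cosh (k * (1 - y)) / sinh k) * sinh (k * y) := by
    rw [intervalIntegral.integral_congr fun z hz => greenG'_eq_of_le (uIcc_of_le hy0 ▸ hz).2,
      intervalIntegral.integral_const_mul, integral_mul_cosh_mul]
    simp
  have hright : ∫ z in y..1, greenG' k y z
      = -(cosh (k * y) / sinh k) * sinh (k * (1 - y)) := by
    rw [intervalIntegral.integral_congr fun z hz => greenG'_eq_of_ge (uIcc_of_le hy1 ▸ hz).1,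
      intervalIntegral.integral_const_mul,
      intervalIntegral.integral_comp_sub_left (fun z => (k : ℝ) * cosh (k * z)),
      integral_mul_cosh_mul]
    simp
  rw [← intervalIntegral.integral_add_adjacent_intervals
      ((continuous_greenG' k y).intervalIntegrable 0 y)
      ((continuous_greenG' k y).intervalIntegrable y 1), hleft, hright]
  have hsum : sinh (k * y) * cosh (k * (1 - y)) + cosh (k * y) * sinh (k * (1 - y)) = sinh k := by
    rw [← sinh_add]; ring_nf
  field_simp
  linarith

end

theorem greenG'_integral_bound :
    ∃ C : ℝ, 0 < C ∧ ∀ (k : ℤ), k ≠ 0 → ∀ y ∈ Set.Icc (0:ℝ) 1,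
      (∫ z in (0:ℝ)..1, |greenG' k y z|) ≤ C := by
  refine ⟨1, one_pos, fun k hk y hy => le_of_eq ?_⟩
  calc ∫ z in (0 : ℝ)..1, |greenG' k y z|
      = ∫ z in (0 : ℝ)..1, -greenG' k y z :=
        intervalIntegral.integral_congr fun z _ => abs_of_nonpos (greenG'_nonpos hk)
    _ = 1 := by rw [intervalIntegral.integral_neg, integral_greenG' hk hy, neg_neg]
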